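/- arXiv:1709.03528 — 2 statements merged into one kernel-verified Lean document; each statement's English description precedes it below -/
import Mathlib

section
/- Let f : ℝ^d → ℝ be twice continuously differentiable with L-Lipschitz Hessian, let w⋆ satisfy ∇f(w⋆) = 0, and let w_t ∈ ℝ^d with g_t := ∇f(w_t), H_t := ∇²f(w_t) positive definite, and φ_t(p) := ½pᵀH_t p − pᵀg_t. Let α ∈ (0,1) and suppose p̃_t ∈ ℝ^d satisfies φ_t(p̃_t) ≤ (1 − α²)·min_p φ_t(p). Then, with w_{t+1} := w_t − p̃_t, Δ_t := w_t − w⋆, and Δ_{t+1} := w_{t+1} − w⋆, one has Δ_{t+1}ᵀ H_t Δ_{t+1} ≤ L·‖Δ_t‖₂²·‖Δ_{t+1}‖₂ + (α²/(1 − α²))·Δ_tᵀ H_t Δ_t. -/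
/-!
Let `Δ = w_t - w⋆` and `Δ' = w_{t+1} - w⋆ = Δ - p̃`. Expanding the quadratic model,
`φ(Δ - Δ') = φ(Δ) + ½Δ'ᵀHΔ' - Δ'ᵀ(HΔ - g)`, while comparing with the point `(1 - α²)⁻¹Δ`
bounds `(1 - α²)·inf φ` by `φ(Δ) + ½(α²/(1 - α²))ΔᵀHΔ`; the infimum is a genuine one because
a positive definite `H` is onto in finite dimension, so `φ` is bounded below by `φ(H⁻¹g)`.
Hence `Δ'ᵀHΔ' ≤ 2Δ'ᵀ(HΔ - g) + (α²/(1 - α²))ΔᵀHΔ`, and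
`HΔ - g = ∇²f(w_t)(w_t - w⋆) - (∇f(w_t) - ∇f(w⋆))` is a Taylor remainder of the gradient,
of norm at most `L/2‖Δ‖²`.
-/

open InnerProductSpace

theorem norm_sub_sub_fderiv_le_of_lipschitz_fderiv {E G : Type*} [NormedAddCommGroup E]
    [NormedSpace ℝ E] [NormedAddCommGroup G] [NormedSpace ℝ G] {F : E → G} {F' : E → E →L[ℝ] G}
    {L : ℝ} (hF : ∀ x, HasFDerivAt F (F' x) x) (hF' : ∀ x y, ‖F' x - F' y‖ ≤ L * ‖x - y‖)
    (x y : E) : ‖F y - F x - F' x (y - x)‖ ≤ L / 2 * ‖y - x‖ ^ 2 := by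
  set v := y - x
  let R : ℝ → G := fun t => F (x + t • v) - F x - t • F' x v
  have hR : ∀ t, HasDerivAt R (F' (x + t • v) v - F' x v) t := fun t => by
    have hline : HasDerivAt (fun s : ℝ => x + s • v) v t := by
      simpa using ((hasDerivAt_id t).smul_const v).const_add x
    exact (((hF _).comp_hasDerivAt t hline).sub_const (F x)).sub
      (by simpa using (hasDerivAt_id t).smul_const (F' x v))
  have hR' : ∀ t ∈ Set.Ico (0 : ℝ) 1, ‖F' (x + t • v) v - F' x v‖ ≤ L * ‖v‖ ^ 2 * t := by
    intro t ht
    calc ‖F' (x + t • v) v - F' x v‖ = ‖(F' (x + t • v) - F' x) v‖ := rfl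
      _ ≤ ‖F' (x + t • v) - F' x‖ * ‖v‖ := ContinuousLinearMap.le_opNorm _ _
      _ ≤ L * ‖t • v‖ * ‖v‖ := by gcongr; simpa using hF' (x + t • v) x
      _ = L * ‖v‖ ^ 2 * t := by rw [norm_smul, Real.norm_of_nonneg ht.1]; ring
  have hB : ∀ t : ℝ, HasDerivAt (fun t => L / 2 * ‖v‖ ^ 2 * t ^ 2) (L * ‖v‖ ^ 2 * t) t :=
    fun t => ((hasDerivAt_pow 2 t).const_mul (L / 2 * ‖v‖ ^ 2)).congr_deriv (by norm_num; ring)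
  -- Integrating the linear bound on `‖R'‖` rather than using its supremum gives the factor `1/2`.
  have hR1 := image_norm_le_of_norm_deriv_right_le_deriv_boundary (a := 0) (b := 1)
    (fun t _ => (hR t).continuousAt.continuousWithinAt) (fun t _ => (hR t).hasDerivWithinAt)
    (by simp [R]) hB hR' (Set.right_mem_Icc.2 zero_le_one)
  simpa [R, v] using hR1

theorem ContDiffAt.isSymmetric_fderiv_gradient {E : Type*} [NormedAddCommGroup E]
    [InnerProductSpace ℝ E] [CompleteSpace E] {f : E → ℝ} {x : E} (hf : ContDiffAt ℝ 2 f x) :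
    (fderiv ℝ (gradient f) x : E →ₗ[ℝ] E).IsSymmetric := by
  have hdual : fderiv ℝ f = toDual ℝ E ∘ gradient f := (toDual_comp_gradient).symm
  intro v w
  have := hf.isSymmSndFDerivAt (by simp) w v
  rw [hdual, LinearIsometryEquiv.comp_fderiv, ContinuousLinearMap.comp_apply,
    ContinuousLinearMap.comp_apply] at this
  exact this.symm.trans (real_inner_comm _ _)

section QuadModel

variable {E : Type*} [NormedAddCommGroup E] [InnerProductSpace ℝ E]

noncomputable def quadModel (H : E →L[ℝ] E) (g p : E) : ℝ := 1 / 2 * ⟪p, H p⟫_ℝ - ⟪p, g⟫_ℝ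

variable {H : E →L[ℝ] E} {g : E}

theorem quadModel_sub (hH : (H : E →ₗ[ℝ] E).IsSymmetric) (x y : E) :
    quadModel H g (x - y) = quadModel H g x + 1 / 2 * ⟪y, H y⟫_ℝ - ⟪y, H x - g⟫_ℝ := by
  have hxy : ⟪x, H y⟫_ℝ = ⟪y, H x⟫_ℝ := by rw [real_inner_comm]; exact hH y x
  simp only [quadModel, map_sub, inner_sub_left, inner_sub_right, hxy]
  ring

theorem smul_quadModel_inv_smul {s : ℝ} (hs : s ≠ 0) (x : E) :
    s * quadModel H g (s⁻¹ • x) = quadModel H g x + 1 / 2 * (s⁻¹ - 1) * ⟪x, H x⟫_ℝ := by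
  simp only [quadModel, map_smul, real_inner_smul_left, real_inner_smul_right]
  field_simp
  ring

theorem bddBelow_range_quadModel (hH : (H : E →ₗ[ℝ] E).IsSymmetric)
    (hnonneg : ∀ x, 0 ≤ ⟪x, H x⟫_ℝ) {p₀ : E} (hp₀ : H p₀ = g) :
    BddBelow (Set.range (quadModel H g)) := by
  refine ⟨quadModel H g p₀, ?_⟩
  rintro _ ⟨p, rfl⟩
  have h := quadModel_sub (g := g) hH p₀ (p₀ - p)
  rw [sub_sub_cancel, hp₀, sub_self, inner_zero_right] at h
  linarith [hnonneg (p₀ - p)]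

theorem inner_self_le_of_quadModel_le_mul_iInf (hH : (H : E →ₗ[ℝ] E).IsSymmetric)
    (hbdd : BddBelow (Set.range (quadModel H g))) {s : ℝ} (hs : 0 < s) {Δ Δ' : E}
    (h : quadModel H g (Δ - Δ') ≤ s * ⨅ p, quadModel H g p) :
    ⟪Δ', H Δ'⟫_ℝ ≤ 2 * ⟪Δ', H Δ - g⟫_ℝ + (s⁻¹ - 1) * ⟪Δ, H Δ⟫_ℝ := by
  have hcmp := h.trans (mul_le_mul_of_nonneg_left (ciInf_le hbdd (s⁻¹ • Δ)) hs.le)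
  rw [quadModel_sub hH, smul_quadModel_inv_smul hs.ne'] at hcmp
  linarith

theorem ContinuousLinearMap.surjective_of_inner_map_self_pos [FiniteDimensional ℝ E]
    {T : E →L[ℝ] E} (hT : ∀ x ≠ 0, 0 < ⟪x, T x⟫_ℝ) : Function.Surjective T := by
  refine (LinearMap.injective_iff_surjective (f := (T : E →ₗ[ℝ] E))).mp ?_
  rw [injective_iff_map_eq_zero]
  intro x hx
  by_contra hx0
  have hTx : T x = 0 := hx
  simpa [hTx] using hT x hx0

end QuadModel

theorem ContDiff.differentiable_gradient {E : Type*} [NormedAddCommGroup E]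
    [InnerProductSpace ℝ E] [CompleteSpace E] {f : E → ℝ} (hf : ContDiff ℝ 2 f) :
    Differentiable ℝ (gradient f) :=
  (toDual ℝ E).symm.differentiable.comp ((hf.fderiv_right le_rfl).differentiable one_ne_zero)

/-- **Lemma 8 (convergence of the approximate Newton step).**
If `f` is `C²` with `L`-Lipschitz Hessian, `∇f(w⋆) = 0`, `H_t = ∇²f(w_t)` is
positive definite, `φ_t(p) = ½pᵀH_t p − pᵀg_t` with `g_t = ∇f(w_t)`, and the
direction `p̃_t` satisfies `φ_t(p̃_t) ≤ (1 − α²)·min_p φ_t(p)` for some `α ∈ (0,1)`,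
then with `w_{t+1} = w_t − p̃_t`, `Δ_t = w_t − w⋆`, `Δ_{t+1} = w_{t+1} − w⋆`:
`Δ_{t+1}ᵀH_tΔ_{t+1} ≤ L‖Δ_t‖²‖Δ_{t+1}‖ + (α²/(1−α²))·Δ_tᵀH_tΔ_t`. -/
theorem giant_newton_step_convergence
    (d : ℕ) (f : EuclideanSpace ℝ (Fin d) → ℝ) (L : ℝ)
    (hf : ContDiff ℝ 2 f)
    (hLip : ∀ w w' : EuclideanSpace ℝ (Fin d),
      ‖fderiv ℝ (gradient f) w - fderiv ℝ (gradient f) w'‖ ≤ L * ‖w - w'‖)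
    (wstar wt : EuclideanSpace ℝ (Fin d))
    (hstar : gradient f wstar = 0)
    (Ht : EuclideanSpace ℝ (Fin d) →L[ℝ] EuclideanSpace ℝ (Fin d))
    (hHt : Ht = fderiv ℝ (gradient f) wt)
    (hpos : ∀ x : EuclideanSpace ℝ (Fin d), x ≠ 0 → 0 < (inner ℝ x (Ht x) : ℝ))
    (gt : EuclideanSpace ℝ (Fin d)) (hgt : gt = gradient f wt)
    (φ : EuclideanSpace ℝ (Fin d) → ℝ)
    (hφ : ∀ p, φ p = (1 / 2) * (inner ℝ p (Ht p) : ℝ) - (inner ℝ p gt : ℝ))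
    (α : ℝ) (hα : α ∈ Set.Ioo (0 : ℝ) 1)
    (ptilde : EuclideanSpace ℝ (Fin d))
    (hpt : φ ptilde ≤ (1 - α ^ 2) * (⨅ p, φ p))
    (wt1 Δt Δt1 : EuclideanSpace ℝ (Fin d))
    (hwt1 : wt1 = wt - ptilde)
    (hΔt : Δt = wt - wstar) (hΔt1 : Δt1 = wt1 - wstar) :
    (inner ℝ Δt1 (Ht Δt1) : ℝ)
      ≤ L * ‖Δt‖ ^ 2 * ‖Δt1‖ + (α ^ 2 / (1 - α ^ 2)) * (inner ℝ Δt (Ht Δt) : ℝ) := by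
  have hs : 0 < 1 - α ^ 2 := by nlinarith [hα.1, hα.2]
  have hφq : φ = quadModel Ht gt := funext hφ
  have hsym : (Ht : EuclideanSpace ℝ (Fin d) →ₗ[ℝ] EuclideanSpace ℝ (Fin d)).IsSymmetric := by
    rw [hHt]; exact hf.contDiffAt.isSymmetric_fderiv_gradient
  obtain ⟨p₀, hp₀⟩ := ContinuousLinearMap.surjective_of_inner_map_self_pos hpos gt
  have hbdd := bddBelow_range_quadModel hsym
    (fun x => (eq_or_ne x 0).elim (fun hx => by simp [hx]) fun hx => (hpos x hx).le) hp₀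
  have hpt' : ptilde = Δt - Δt1 := by rw [hΔt1, hwt1, hΔt]; abel
  have hstep := inner_self_le_of_quadModel_le_mul_iInf hsym hbdd hs (hφq ▸ hpt' ▸ hpt)
  have htaylor : ‖Ht Δt - gt‖ ≤ L / 2 * ‖Δt‖ ^ 2 := by
    have h := norm_sub_sub_fderiv_le_of_lipschitz_fderiv
      (fun x => (hf.differentiable_gradient x).hasFDerivAt) hLip wt wstar
    have hrem : gradient f wstar - gradient f wt - fderiv ℝ (gradient f) wt (wstar - wt)
        = Ht Δt - gt := by
      rw [hstar, ← hHt, ← hgt, hΔt, ← neg_sub wt wstar, map_neg]; abel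
    rwa [hrem, norm_sub_rev wstar wt, ← hΔt] at h
  have hcs : ⟪Δt1, Ht Δt - gt⟫_ℝ ≤ ‖Δt1‖ * (L / 2 * ‖Δt‖ ^ 2) :=
    (real_inner_le_norm _ _).trans (mul_le_mul_of_nonneg_left htaylor (norm_nonneg _))
  have hα' : α ^ 2 / (1 - α ^ 2) = (1 - α ^ 2)⁻¹ - 1 := by field_simp; ring
  rw [hα']
  linarith
end

section
/- Let A ∈ ℝ^{n×d} and let M ∈ ℝ^{d×d} be symmetric positive semidefinite, with H := AᵀA + M positive definite. Then H^{−1/2}(AᵀA)H^{−1/2} ⪯ ϑ·I_d in the Loewner order, where ϑ := σ_max(AᵀA)/(σ_max(AᵀA) + σ_min(M)) ≤ 1. -/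
/-!
Write `S = AᵀA`, `a = σ_max(S)` and `m = σ_min(M)`, so that `S ⪯ a I` and `m I ⪯ M`. With
`ϑ = a / (a + m)` one has `ϑ m = (1 - ϑ) a` (also when `a + m = 0`, where `a = m = ϑ = 0`), hence
`ϑ (S + M) - S = ϑ (M - m I) + (1 - ϑ) (a I - S) ⪰ 0`, i.e. `S ⪯ ϑ H`. Conjugating this by the
self-adjoint matrix `H^{-1/2}` gives `H^{-1/2} S H^{-1/2} ⪯ ϑ I`.
-/

open Matrix

/-- Largest eigenvalue of a (symmetric) real matrix, as the supremum of its spectrum. -/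
noncomputable def sigmaMax {d : ℕ} (A : Matrix (Fin d) (Fin d) ℝ) : ℝ :=
  sSup (spectrum ℝ A)

/-- Smallest eigenvalue of a (symmetric) real matrix, as the infimum of its spectrum. -/
noncomputable def sigmaMin {d : ℕ} (A : Matrix (Fin d) (Fin d) ℝ) : ℝ :=
  sInf (spectrum ℝ A)

/-- The positive semidefinite square root of a positive semidefinite matrix
(the definition `Matrix.PosSemidef.sqrt` of the older Mathlib, since removed). -/
noncomputable def Matrix.PosSemidef.sqrt {n : Type*} [Fintype n] [DecidableEq n]
    {A : Matrix n n ℝ} (hA : A.PosSemidef) : Matrix n n ℝ :=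
  (hA.1.eigenvectorUnitary : Matrix n n ℝ) * diagonal ((↑) ∘ Real.sqrt ∘ hA.1.eigenvalues) *
    (star hA.1.eigenvectorUnitary : Matrix n n ℝ)

open scoped MatrixOrder

namespace Matrix

lemma le_div_add_smul_add {n : Type*} [DecidableEq n] {S M : Matrix n n ℝ} {a m : ℝ}
    (ha : 0 ≤ a) (hm : 0 ≤ m) (hS : S ≤ a • 1) (hM : m • 1 ≤ M) :
    S ≤ (a / (a + m)) • (S + M) := by
  have ht0 : 0 ≤ a / (a + m) := by positivity
  have ht1 : a / (a + m) ≤ 1 := div_le_one_of_le₀ (le_add_of_nonneg_right hm) (add_nonneg ha hm)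
  have hbal : a / (a + m) * m = (1 - a / (a + m)) * a := by
    rcases (add_nonneg ha hm).eq_or_lt with h | h
    · obtain rfl : a = 0 := by linarith
      obtain rfl : m = 0 := by linarith
      simp
    · field_simp
      ring
  generalize a / (a + m) = t at hbal ht0 ht1
  have hsplit : t • (S + M) - S = t • (M - m • 1) + (1 - t) • (a • 1 - S) := by
    match_scalars
    · ring
    · ring
    · linear_combination hbal
  rw [le_iff, hsplit]
  exact ((le_iff.mp hM).smul ht0).add ((le_iff.mp hS).smul (sub_nonneg.mpr ht1))

variable {n : Type*} [Fintype n] [DecidableEq n]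

lemma inv_mul_mul_inv_le_smul_one {R S : Matrix n n ℝ} {c : ℝ} (hR : IsSelfAdjoint R)
    (hRu : IsUnit R) (h : S ≤ c • (R * R)) : R⁻¹ * S * R⁻¹ ≤ c • 1 := by
  have hdet : IsUnit R.det := (isUnit_iff_isUnit_det R).mp hRu
  have hconj := star_left_conjugate_le_conjugate h R⁻¹
  rwa [star_eq_conjTranspose, conjTranspose_nonsing_inv, ← star_eq_conjTranspose, hR.star_eq,
    Matrix.mul_smul, Matrix.smul_mul, ← Matrix.mul_assoc, nonsing_inv_mul _ hdet,
    Matrix.one_mul, mul_nonsing_inv _ hdet] at hconj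

lemma PosSemidef.sqrt_eq_cfcSqrt {A : Matrix n n ℝ} (hA : A.PosSemidef) :
    hA.sqrt = CFC.sqrt A := by
  rw [CFC.sqrt_eq_real_sqrt A hA.nonneg, cfcₙ_eq_cfc, hA.1.cfc_eq]
  rfl

end Matrix

lemma le_sigmaMax_smul_one {d : ℕ} {A : Matrix (Fin d) (Fin d) ℝ} (hA : A.IsHermitian) :
    A ≤ sigmaMax A • 1 := by
  rw [← Algebra.algebraMap_eq_smul_one, le_algebraMap_iff_spectrum_le hA]
  exact fun _ hx => le_csSup A.finite_spectrum.bddAbove hx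

lemma sigmaMin_smul_one_le {d : ℕ} {A : Matrix (Fin d) (Fin d) ℝ} (hA : A.IsHermitian) :
    sigmaMin A • 1 ≤ A := by
  rw [← Algebra.algebraMap_eq_smul_one, algebraMap_le_iff_le_spectrum hA]
  exact fun _ hx => csInf_le A.finite_spectrum.bddBelow hx

lemma sigmaMax_nonneg {d : ℕ} {A : Matrix (Fin d) (Fin d) ℝ} (hA : A.PosSemidef) :
    0 ≤ sigmaMax A :=
  Real.sSup_nonneg (spectrum_nonneg_of_nonneg hA.nonneg)

lemma sigmaMin_nonneg {d : ℕ} {A : Matrix (Fin d) (Fin d) ℝ} (hA : A.PosSemidef) :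
    0 ≤ sigmaMin A :=
  Real.sInf_nonneg (spectrum_nonneg_of_nonneg hA.nonneg)

/-- **The key curvature bound.**
For `M` symmetric positive semidefinite with `H = AᵀA + M` positive definite,
`H^{−1/2}(AᵀA)H^{−1/2} ⪯ ϑ·I` in the Loewner order, where
`ϑ = σmax(AᵀA)/(σmax(AᵀA) + σmin(M)) ≤ 1`. -/
theorem curvature_ratio_bound
    (n d : ℕ) (A : Matrix (Fin n) (Fin d) ℝ)
    (M : Matrix (Fin d) (Fin d) ℝ) (hM : M.PosSemidef)
    (hH : (Aᵀ * A + M).PosDef)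
    (ϑ : ℝ) (hϑ : ϑ = sigmaMax (Aᵀ * A) / (sigmaMax (Aᵀ * A) + sigmaMin M)) :
    ϑ ≤ 1 ∧
      (ϑ • (1 : Matrix (Fin d) (Fin d) ℝ)
        - (hH.posSemidef.sqrt)⁻¹ * (Aᵀ * A) * (hH.posSemidef.sqrt)⁻¹).PosSemidef := by
  have hS : (Aᵀ * A).PosSemidef := posSemidef_conjTranspose_mul_self A
  have ha := sigmaMax_nonneg hS
  have hm := sigmaMin_nonneg hM
  refine ⟨hϑ ▸ div_le_one_of_le₀ (le_add_of_nonneg_right hm) (add_nonneg ha hm), ?_⟩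
  have hH₀ : 0 ≤ Aᵀ * A + M := hH.posSemidef.nonneg
  rw [← le_iff, hH.posSemidef.sqrt_eq_cfcSqrt]
  refine inv_mul_mul_inv_le_smul_one (CFC.sqrt_nonneg _).isSelfAdjoint
    ((CFC.isUnit_sqrt_iff _).mpr hH.isUnit) ?_
  rw [CFC.sqrt_mul_sqrt_self _ hH₀, hϑ]
  exact le_div_add_smul_add ha hm (le_sigmaMax_smul_one hS.1) (sigmaMin_smul_one_le hM.1)
end
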